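/- arXiv:1107.4258 — 4 statements merged into one kernel-verified Lean document; each statement's English description precedes it below -/
import Mathlib

section
/- For f(x) = exp(-a/x) with a > 0, the one-shot game SINR condition x f'(x) = f(x) gives β* = a, and the operating point SINR γ̃ = a/(1+(K-1)a) satisfies γ̃ < β* for K ≥ 2. Consequently the operating-point power p̃_i = (σ²/η_i)·γ̃/(1-(K-1)γ̃) = (σ²/η_i)·a is strictly smaller than the Nash power p_i* = (σ²/η_i)·a/(1-(K-1)a), provided (K-1)a < 1. -/
/-!
Since `f' = f · a / x²` and `f > 0`, the Nash condition `x f' = f` reduces to `x = a`, and the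
operating condition `x (1 - (K - 1) x) f' = f` to the linear equation `(1 - (K - 1) x) a = x`,
whose root is `a / (1 + (K - 1) a)`. Substituting this root, `1 - (K - 1) γ̃ = 1 / (1 + (K - 1) a)`,
so the operating power is `(σ² / η_i) a`, while the Nash power carries the larger factor
`a / (1 - (K - 1) a)`.
-/

open Real

lemma hasDerivAt_exp_neg_div (a : ℝ) {x : ℝ} (hx : x ≠ 0) :
    HasDerivAt (fun x => exp (-a / x)) (exp (-a / x) * (a / x ^ 2)) x := by
  have h := ((hasDerivAt_inv hx).const_mul (-a)).exp
  simp only [← div_eq_mul_inv] at h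
  convert h using 2
  ring

lemma mul_deriv_exp_neg_div_eq_iff (a c : ℝ) {x : ℝ} (hx : x ≠ 0) :
    c * deriv (fun x => exp (-a / x)) x = exp (-a / x) ↔ c * a = x ^ 2 := by
  rw [(hasDerivAt_exp_neg_div a hx).deriv, mul_left_comm, mul_eq_left₀ (exp_pos _).ne',
    mul_div_assoc', div_eq_one_iff_eq (pow_ne_zero 2 hx)]

lemma div_one_add_mul_lt_self {k a : ℝ} (hk : 0 < k) (ha : 0 < a) : a / (1 + k * a) < a :=
  div_lt_self ha (by nlinarith [mul_pos hk ha])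

lemma div_one_add_mul_div_one_sub_mul {k a : ℝ} (h : 0 < 1 + k * a) :
    a / (1 + k * a) / (1 - k * (a / (1 + k * a))) = a := by
  have h' : 1 - k * (a / (1 + k * a)) = 1 / (1 + k * a) := by
    field_simp
    ring
  rw [h', div_div_div_cancel_right₀ h.ne', div_one]

lemma lt_div_one_sub_mul {k a : ℝ} (hk : 0 < k) (ha : 0 < a) (hka : k * a < 1) :
    a < a / (1 - k * a) := by
  rw [lt_div_iff₀ (by linarith)]
  nlinarith [mul_pos hk ha]

/-- with f(x)=exp(-a/x), the Nash SINR is β* = a, the operating SINR is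
γ̃ = a/(1+(K-1)a) < β* for K ≥ 2, and the operating powers p̃_i = (σ²/η_i)a are strictly
smaller than the Nash powers p_i* = (σ²/η_i)a/(1-(K-1)a) when (K-1)a < 1. -/
theorem operating_point_dominates_in_power (a : ℝ) (ha : 0 < a) (K : ℕ) (hK : 2 ≤ K)
    (haK : ((K : ℝ) - 1) * a < 1)
    (η : Fin K → ℝ) (hη : ∀ i, 0 < η i) (σ2 : ℝ) (hσ : 0 < σ2)
    (f : ℝ → ℝ) (hf : ∀ x, f x = Real.exp (-a / x))
    (β γ : ℝ)
    (hβ : 0 < β ∧ β * deriv f β = f β)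
    (hγ : γ ∈ Set.Ioo 0 (1 / ((K : ℝ) - 1)) ∧
      γ * (1 - ((K : ℝ) - 1) * γ) * deriv f γ = f γ)
    (pstar ptilde : Fin K → ℝ)
    (hpstar : ∀ i, pstar i = (σ2 / η i) * (β / (1 - ((K : ℝ) - 1) * β)))
    (hptilde : ∀ i, ptilde i = (σ2 / η i) * (γ / (1 - ((K : ℝ) - 1) * γ))) :
    β = a ∧ γ = a / (1 + ((K : ℝ) - 1) * a) ∧ γ < β ∧
    (∀ i, ptilde i = (σ2 / η i) * a) ∧
    (∀ i, pstar i = (σ2 / η i) * (a / (1 - ((K : ℝ) - 1) * a))) ∧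
    (∀ i, ptilde i < pstar i) := by
  obtain rfl : f = fun x => exp (-a / x) := funext hf
  obtain ⟨hβ0, hβeq⟩ := hβ
  obtain ⟨⟨hγ0, -⟩, hγeq⟩ := hγ
  set k : ℝ := (K : ℝ) - 1
  have hk : 0 < k := by
    have : (2 : ℝ) ≤ K := by exact_mod_cast hK
    linarith
  have hβa : β = a := by
    rw [mul_deriv_exp_neg_div_eq_iff a β hβ0.ne', sq] at hβeq
    exact (mul_left_cancel₀ hβ0.ne' hβeq).symm
  have hγa : γ = a / (1 + k * a) := by
    rw [mul_deriv_exp_neg_div_eq_iff a _ hγ0.ne', sq, mul_assoc] at hγeq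
    rw [eq_div_iff (by positivity)]
    linarith [mul_left_cancel₀ hγ0.ne' hγeq]
  have hptilde_eq : ∀ i, ptilde i = (σ2 / η i) * a := fun i => by
    rw [hptilde i, hγa, div_one_add_mul_div_one_sub_mul (by positivity)]
  have hpstar_eq : ∀ i, pstar i = (σ2 / η i) * (a / (1 - k * a)) := fun i => by
    rw [hpstar i, hβa]
  refine ⟨hβa, hγa, ?_, hptilde_eq, hpstar_eq, fun i => ?_⟩
  · rw [hβa, hγa]
    exact div_one_add_mul_lt_self hk ha
  rw [hptilde_eq i, hpstar_eq i]
  exact mul_lt_mul_of_pos_left (lt_div_one_sub_mul hk ha haK) (div_pos hσ (hη i))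
end

section
/- With f(x) = exp(-a/x), 0 < a < 1/(K-1), each player's utility at the operating point strictly exceeds his utility at the Nash equilibrium: u_i(p̃) > u_i(p*) for every i, where u_i(p) = R f(SINR_i(p))/p_i. -/
/-- with f(x)=exp(-a/x) and 0 < (K-1)a < 1, the operating point
Pareto-dominates the Nash equilibrium: u_i(p̃) > u_i(p*) for every player i,
where u_i(p) = R f(SINR_i(p))/p_i. -/
theorem operating_point_pareto_dominates_nash (K : ℕ) (hK : 2 ≤ K)
    (a : ℝ) (ha : 0 < a) (haK : ((K : ℝ) - 1) * a < 1)
    (R : ℝ) (hR : 0 < R)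
    (η : Fin K → ℝ) (hη : ∀ i, 0 < η i) (σ2 : ℝ) (hσ : 0 < σ2)
    (f : ℝ → ℝ) (hf : ∀ x, f x = Real.exp (-a / x))
    (SINR : (Fin K → ℝ) → Fin K → ℝ)
    (hSINR : ∀ p i, SINR p i =
      p i * η i / ((∑ j ∈ Finset.univ.erase i, p j * η j) + σ2))
    (u : (Fin K → ℝ) → Fin K → ℝ)
    (hu : ∀ p i, u p i = R * f (SINR p i) / p i)
    (pstar ptilde : Fin K → ℝ)
    (hpstar : ∀ i, pstar i = (σ2 / η i) * (a / (1 - ((K : ℝ) - 1) * a)))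
    (hptilde : ∀ i, ptilde i = (σ2 / η i) * a) :
    ∀ i, u ptilde i > u pstar i := by
  intro i
  set c : ℝ := ((K : ℝ) - 1) * a with hc
  have hK1 : (1 : ℝ) ≤ (K : ℝ) - 1 := by
    have : (2 : ℝ) ≤ (K : ℝ) := by exact_mod_cast hK
    linarith
  have hcpos : 0 < c := by positivity
  have hc1 : c < 1 := haK
  have hD : 0 < 1 - c := by linarith
  have hηi := hη i
  have hcard : ((Finset.univ.erase i).card : ℝ) = (K : ℝ) - 1 := by
    rw [Finset.card_erase_of_mem (Finset.mem_univ i), Finset.card_univ,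
      Fintype.card_fin]
    have : 1 ≤ K := by omega
    push_cast [this]
    ring
  -- sums
  have hsum_t : ∑ j ∈ Finset.univ.erase i, ptilde j * η j = ((K : ℝ) - 1) * (σ2 * a) := by
    have : ∀ j ∈ Finset.univ.erase i, ptilde j * η j = σ2 * a := by
      intro j _
      rw [hptilde]
      field_simp [(hη j).ne']
    rw [Finset.sum_congr rfl this, Finset.sum_const, nsmul_eq_mul, hcard]
  have hsum_s : ∑ j ∈ Finset.univ.erase i, pstar j * η j = ((K : ℝ) - 1) * (σ2 * (a / (1 - c))) := by
    have : ∀ j ∈ Finset.univ.erase i, pstar j * η j = σ2 * (a / (1 - c)) := by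
      intro j _
      rw [hpstar]
      field_simp [(hη j).ne', hD.ne']
    rw [Finset.sum_congr rfl this, Finset.sum_const, nsmul_eq_mul, hcard]
  have hpt : ptilde i = (σ2 / η i) * a := hptilde i
  have hps : pstar i = (σ2 / η i) * (a / (1 - c)) := hpstar i
  -- SINR values
  have hS_t : SINR ptilde i = a / (1 + c) := by
    rw [hSINR, hsum_t, hpt]
    rw [div_eq_div_iff (by positivity) (by positivity)]
    field_simp
    ring
  have hS_s : SINR pstar i = a := by
    rw [hSINR, hsum_s, hps]
    have hden : ((K : ℝ) - 1) * (σ2 * (a / (1 - c))) + σ2 = σ2 / (1 - c) := by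
      field_simp
      ring
    rw [hden]
    rw [div_eq_iff (by positivity)]
    field_simp
  -- utilities
  have hu_t : u ptilde i = R * Real.exp (-(1 + c)) * η i / (σ2 * a) := by
    rw [hu, hf, hS_t, hpt]
    have : -a / (a / (1 + c)) = -(1 + c) := by
      field_simp
    rw [this]
    field_simp
  have hu_s : u pstar i = R * (Real.exp (-1) * (1 - c)) * η i / (σ2 * a) := by
    rw [hu, hf, hS_s, hps]
    have : -a / a = -1 := by field_simp
    rw [this]
    field_simp
  rw [hu_t, hu_s]
  have key : Real.exp (-1) * (1 - c) < Real.exp (-(1 + c)) := by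
    have h1 : (-c) + 1 < Real.exp (-c) := Real.add_one_lt_exp (by linarith)
    have h2 : Real.exp (-(1 + c)) = Real.exp (-1) * Real.exp (-c) := by
      rw [← Real.exp_add]; ring_nf
    rw [h2]
    have h3 := Real.exp_pos (-1)
    nlinarith
  gcongr
end

section
/- If only a subset S ⊆ {1,...,K} of players transmit at the operating point for |S| = k players (powers p_i = (σ²/η_i)·γ̃_k/(1-(k-1)γ̃_k) for i ∈ S, p_i = 0 otherwise), then each transmitting player i ∈ S has utility u_i = (R η_i/σ²) · f(γ̃_k) · (1-(k-1)γ̃_k)/γ̃_k, which is increasing in η_i. Consequently, for a fixed number k of active players, total utility Σ_{i∈S} u_i is maximized by choosing S to be the k players with the largest channel gains. -/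
/-!
At the `k`-player operating point every active player is received with the same power
`q = σ² γ/(1 - (k-1)γ)`, so each one sees the SINR `q/((k-1)q + σ²) = γ`. Its utility
`R f(γ)/p_i` is then a fixed positive multiple of `η_i`, and comparing total utilities of two
`k`-subsets reduces to comparing the gain sums over their symmetric difference.
-/

open Finset

namespace Finset

variable {ι M : Type*} [DecidableEq ι] [AddCommMonoid M] [LinearOrder M] [IsOrderedAddMonoid M]

theorem sum_le_sum_of_card_eq_of_forall_sdiff_le {S T : Finset ι} {g : ι → M}
    (hcard : S.card = T.card) (hle : ∀ i ∈ T \ S, ∀ j ∈ S \ T, g j ≤ g i) :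
    ∑ i ∈ S, g i ≤ ∑ i ∈ T, g i := by
  have hcard_sdiff : (S \ T).card = (T \ S).card := by
    have hS := card_sdiff_add_card_inter S T
    have hT := card_sdiff_add_card_inter T S
    rw [inter_comm] at hT
    omega
  have hsdiff : ∑ i ∈ S \ T, g i ≤ ∑ i ∈ T \ S, g i := by
    rcases (T \ S).eq_empty_or_nonempty with hempty | hne
    · rw [hempty, card_empty, card_eq_zero] at hcard_sdiff
      rw [hempty, hcard_sdiff]
    · obtain ⟨m, hm, hmin⟩ := (T \ S).exists_min_image g hne
      calc ∑ i ∈ S \ T, g i ≤ (S \ T).card • g m := sum_le_card_nsmul _ _ _ (hle m hm)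
        _ = (T \ S).card • g m := by rw [hcard_sdiff]
        _ ≤ ∑ i ∈ T \ S, g i := card_nsmul_le_sum _ _ _ hmin
  rw [← sum_inter_add_sum_sdiff S T, ← sum_inter_add_sum_sdiff T S, inter_comm]
  exact add_le_add_right hsdiff _

end Finset

theorem sinr_eq_of_received_power_eq {ι : Type*} [DecidableEq ι] {S : Finset ι} {k : ℕ}
    (hS : S.card = k) {i : ι} (hi : i ∈ S) {P η : ι → ℝ} {q : ℝ} (hq : ∀ j ∈ S, P j * η j = q)
    (σ2 : ℝ) :
    P i * η i / (∑ j ∈ S.erase i, P j * η j + σ2) = q / (((k : ℝ) - 1) * q + σ2) := by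
  have hk : 0 < k := hS ▸ card_pos.mpr ⟨i, hi⟩
  rw [sum_congr rfl fun j hj => hq j (mem_of_mem_erase hj), sum_const, card_erase_of_mem hi,
    hS, nsmul_eq_mul, Nat.cast_pred hk, hq i hi]

theorem operating_point_sinr {m σ2 γ : ℝ} (hσ : σ2 ≠ 0) (hd : 1 - m * γ ≠ 0) :
    σ2 * (γ / (1 - m * γ)) / (m * (σ2 * (γ / (1 - m * γ))) + σ2) = γ := by
  have htotal : m * (σ2 * (γ / (1 - m * γ))) + σ2 = σ2 / (1 - m * γ) := by
    field_simp
    ring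
  rw [htotal, mul_div_assoc', div_div_div_cancel_right₀ hd, mul_div_cancel_left₀ γ hσ]

theorem utility_at_operating_point {ι : Type*} [DecidableEq ι] {S : Finset ι} {k : ℕ}
    (hS : S.card = k) {i : ι} (hi : i ∈ S) {P η : ι → ℝ} {σ2 γ : ℝ} (R : ℝ) (f : ℝ → ℝ)
    (hη : ∀ j ∈ S, η j ≠ 0) (hσ : σ2 ≠ 0) (hγ : γ ≠ 0) (hd : 1 - ((k : ℝ) - 1) * γ ≠ 0)
    (hP : ∀ j ∈ S, P j = σ2 / η j * (γ / (1 - ((k : ℝ) - 1) * γ))) :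
    R * f (P i * η i / (∑ j ∈ S.erase i, P j * η j + σ2)) / P i
      = R * η i / σ2 * f γ * (1 - ((k : ℝ) - 1) * γ) / γ := by
  have hrecv : ∀ j ∈ S, P j * η j = σ2 * (γ / (1 - ((k : ℝ) - 1) * γ)) := fun j hj => by
    rw [hP j hj]
    field_simp [hη j hj]
  rw [sinr_eq_of_received_power_eq hS hi hrecv, operating_point_sinr hσ hd, hP i hi]
  field_simp [hη i hi]

theorem bus_best_subset_general (K : ℕ) (η : Fin K → ℝ) (hη : ∀ i, 0 < η i)
    (σ2 R : ℝ) (hσ : 0 < σ2) (hR : 0 < R)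
    (k : ℕ)
    (γ : ℝ) (hγ0 : 0 < γ) (hγ1 : ((k : ℝ) - 1) * γ < 1)
    (f : ℝ → ℝ) (hfγ : 0 < f γ)
    (p : Finset (Fin K) → Fin K → ℝ)
    (hp : ∀ S i, p S i =
      if i ∈ S then (σ2 / η i) * (γ / (1 - ((k : ℝ) - 1) * γ)) else 0)
    (u : Finset (Fin K) → Fin K → ℝ)
    (hu : ∀ S i, u S i =
      if i ∈ S then
        R * f (p S i * η i / ((∑ j ∈ S.erase i, p S j * η j) + σ2)) / p S i
      else 0) :
    (∀ S : Finset (Fin K), S.card = k → ∀ i ∈ S,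
      u S i = (R * η i / σ2) * f γ * (1 - ((k : ℝ) - 1) * γ) / γ) ∧
    (∀ S : Finset (Fin K), S.card = k → ∀ i ∈ S, ∀ j ∈ S,
      η i < η j → u S i < u S j) ∧
    (∀ S T : Finset (Fin K), S.card = k → T.card = k →
      (∀ i ∈ T \ S, ∀ j ∈ S \ T, η j ≤ η i) →
      ∑ i ∈ S, u S i ≤ ∑ i ∈ T, u T i) := by
  have hden : 0 < 1 - ((k : ℝ) - 1) * γ := by linarith
  have utility : ∀ S : Finset (Fin K), S.card = k → ∀ i ∈ S,
      u S i = (R * η i / σ2) * f γ * (1 - ((k : ℝ) - 1) * γ) / γ := fun S hS i hi => by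
    rw [hu, if_pos hi]
    exact utility_at_operating_point hS hi R f (fun j _ => (hη j).ne') hσ.ne' hγ0.ne' hden.ne'
      fun j hj => (hp S j).trans (if_pos hj)
  obtain ⟨C, hC, linear⟩ : ∃ C > 0, ∀ S : Finset (Fin K), S.card = k → ∀ i ∈ S,
      u S i = C * η i :=
    ⟨R / σ2 * f γ * (1 - ((k : ℝ) - 1) * γ) / γ,
      div_pos (mul_pos (mul_pos (div_pos hR hσ) hfγ) hden) hγ0,
      fun S hS i hi => by rw [utility S hS i hi]; ring⟩
  refine ⟨utility, fun S hS i hi j hj hij => ?_, fun S T hS hT hTS => ?_⟩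
  · rw [linear S hS i hi, linear S hS j hj]
    exact mul_lt_mul_of_pos_left hij hC
  · rw [sum_congr rfl (linear S hS), sum_congr rfl (linear T hT), ← mul_sum, ← mul_sum]
    exact mul_le_mul_of_nonneg_left
      (sum_le_sum_of_card_eq_of_forall_sdiff_le (hS.trans hT.symm) hTS) hC.le

/-- BUS scheme, Theorem 2: if only the players of a subset S with |S| = k
transmit at the k-player operating point, each active player i has utility
u_i = (R η_i/σ²) f(γ̃_k)(1-(k-1)γ̃_k)/γ̃_k, which is increasing in η_i; hence for fixed k
total utility is maximized by picking the k players with the largest gains. -/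
theorem bus_best_subset (K : ℕ) (η : Fin K → ℝ) (hη : ∀ i, 0 < η i)
    (σ2 R : ℝ) (hσ : 0 < σ2) (hR : 0 < R)
    (k : ℕ) (hk : 1 ≤ k)
    (γ : ℝ) (hγ0 : 0 < γ) (hγ1 : ((k : ℝ) - 1) * γ < 1)
    (f : ℝ → ℝ) (hfγ : 0 < f γ)
    (p : Finset (Fin K) → Fin K → ℝ)
    (hp : ∀ S i, p S i =
      if i ∈ S then (σ2 / η i) * (γ / (1 - ((k : ℝ) - 1) * γ)) else 0)
    (u : Finset (Fin K) → Fin K → ℝ)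
    (hu : ∀ S i, u S i =
      if i ∈ S then
        R * f (p S i * η i / ((∑ j ∈ S.erase i, p S j * η j) + σ2)) / p S i
      else 0) :
    (∀ S : Finset (Fin K), S.card = k → ∀ i ∈ S,
      u S i = (R * η i / σ2) * f γ * (1 - ((k : ℝ) - 1) * γ) / γ) ∧
    (∀ S : Finset (Fin K), S.card = k → ∀ i ∈ S, ∀ j ∈ S,
      η i < η j → u S i < u S j) ∧
    (∀ S T : Finset (Fin K), S.card = k → T.card = k →
      (∀ i ∈ T \ S, ∀ j ∈ S \ T, η j ≤ η i) →
      ∑ i ∈ S, u S i ≤ ∑ i ∈ T, u T i) :=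
  bus_best_subset_general K η hη σ2 R hσ hR k γ hγ0 hγ1 f hfγ p hp u hu
end

section
/- For the two-player game with f(x) = exp(-a/x), 0 < a < 1, if player 2 plays his operating-point power p̃_2 = σ²a/η_2 and player 1 best-responds, player 1's optimal power is p_1 = (σ²(1+a)/η_1)·a, achieving SINR a; his resulting utility exceeds his utility at the symmetric operating point (where both play p̃_i and each gets SINR a/(1+a)). Precisely, the best-response utility is (Rη_1/(σ²a(1+a)))e^{-1} and the operating-point utility is (Rη_1/(σ²a))e^{-(1+a)}, and e^{-1}/(1+a) > e^{-(1+a)} for a ∈ (0,1). -/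
/-- two-player game, f(x)=e^{-a/x}, 0<a<1. If player 2 plays
p̃_2 = σ²a/η_2, player 1's best response is p_1 = σ²(1+a)a/η_1, with SINR a and
utility (Rη_1/(σ²a(1+a)))e^{-1}, which strictly exceeds his operating-point utility
(Rη_1/(σ²a))e^{-(1+a)}; indeed e^{-1}/(1+a) > e^{-(1+a)} for a ∈ (0,1). -/
theorem best_response_beats_operating_point (a : ℝ) (ha0 : 0 < a) (ha1 : a < 1)
    (η1 η2 σ2 R : ℝ) (hη1 : 0 < η1) (hη2 : 0 < η2) (hσ : 0 < σ2) (hR : 0 < R)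
    (f : ℝ → ℝ) (hf : ∀ x, f x = Real.exp (-a / x))
    (p2 : ℝ) (hp2 : p2 = σ2 * a / η2)
    (u1 : ℝ → ℝ) (hu1 : ∀ p1, u1 p1 = R * f (p1 * η1 / (p2 * η2 + σ2)) / p1)
    (pbr : ℝ) (hpbr : pbr = (σ2 * (1 + a) / η1) * a) :
    pbr * η1 / (p2 * η2 + σ2) = a ∧
    (∀ q : ℝ, 0 < q → u1 q ≤ u1 pbr) ∧
    u1 pbr = (R * η1 / (σ2 * a * (1 + a))) * Real.exp (-1) ∧
    (R * η1 / (σ2 * a * (1 + a))) * Real.exp (-1) >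
      (R * η1 / (σ2 * a)) * Real.exp (-(1 + a)) ∧
    Real.exp (-1) / (1 + a) > Real.exp (-(1 + a)) := by
  have h1a : (0:ℝ) < 1 + a := by linarith
  have hC : p2 * η2 + σ2 = σ2 * (1 + a) := by
    rw [hp2]; field_simp; ring
  have hsinr : pbr * η1 / (p2 * η2 + σ2) = a := by
    rw [hC, hpbr]; field_simp
  have hubr : u1 pbr = (R * η1 / (σ2 * a * (1 + a))) * Real.exp (-1) := by
    rw [hu1, hf, hsinr, hpbr]
    have h : -a / a = -1 := by field_simp
    rw [h]
    field_simp
  have hlast : Real.exp (-1) / (1 + a) > Real.exp (-(1 + a)) := by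
    rw [gt_iff_lt, lt_div_iff₀ h1a]
    have h := Real.add_one_lt_exp (x := a) (ne_of_gt ha0)
    calc Real.exp (-(1 + a)) * (1 + a) < Real.exp (-(1 + a)) * Real.exp a := by
          apply mul_lt_mul_of_pos_left (by linarith) (Real.exp_pos _)
      _ = Real.exp (-1) := by rw [← Real.exp_add]; ring_nf
  refine ⟨hsinr, ?_, hubr, ?_, hlast⟩
  · intro q hq
    rw [hu1, hf, hC, hubr]
    set t : ℝ := a * (σ2 * (1 + a)) / (q * η1) with ht
    have htpos : 0 < t := by positivity
    have harg : -a / (q * η1 / (σ2 * (1 + a))) = -t := by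
      rw [ht]; field_simp
    rw [harg]
    have key : t ≤ Real.exp (t - 1) := by
      have := Real.add_one_le_exp (t - 1)
      linarith
    have hmain : Real.exp (-t) * t ≤ Real.exp (-1) := by
      calc Real.exp (-t) * t ≤ Real.exp (-t) * Real.exp (t - 1) :=
            mul_le_mul_of_nonneg_left key (Real.exp_nonneg _)
        _ = Real.exp (-1) := by rw [← Real.exp_add]; ring_nf
    have hqt : q = a * (σ2 * (1 + a)) / (t * η1) := by
      rw [ht]; field_simp
    have heq : R * Real.exp (-t) / q
        = (R * η1 / (σ2 * a * (1 + a))) * (Real.exp (-t) * t) := by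
      rw [hqt]; field_simp
    rw [heq]
    exact mul_le_mul_of_nonneg_left hmain (by positivity)
  · have heq : (R * η1 / (σ2 * a * (1 + a))) * Real.exp (-1)
        = (R * η1 / (σ2 * a)) * (Real.exp (-1) / (1 + a)) := by
      field_simp
    rw [heq]
    exact mul_lt_mul_of_pos_left hlast (by positivity)
end
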